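/- arXiv:1310.5729 — 2 statements merged into one kernel-verified Lean document; each statement's English description precedes it below -/
import Mathlib

section
/- Let d ≥ 1 and let A ⊆ ℤ^d. If the lower density of A equals α > 0 and lim_{i→∞} d̄(A^{[i]}) = α, then A is lower thick of level α; that is, for every k ∈ ℕ, the lower density of {z ∈ ℤ^d : z + [-k,k]^d ⊆ A} is at least α. -/
open Filter Pointwise

/-- The `d`-dimensional cube `[-m, m]^d` in `ℤ^d`. -/
def cube (d m : ℕ) : Set (Fin d → ℤ) :=
  Set.Icc (fun _ => -(m : ℤ)) (fun _ => (m : ℤ))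

/-- The translated cube `z + [-k, k]^d`. -/
def cubeAt (d k : ℕ) (z : Fin d → ℤ) : Set (Fin d → ℤ) :=
  Set.Icc (fun i => z i - (k : ℤ)) (fun i => z i + (k : ℤ))

/-- The `n`-block set `A_{[n]} = {x : (n·x + [0, n-1]^d) ∩ A ≠ ∅}`. -/
def blockSet (d : ℕ) (A : Set (Fin d → ℤ)) (n : ℕ) : Set (Fin d → ℤ) :=
  {x | ∃ t ∈ Set.Icc (0 : Fin d → ℤ) (fun _ => (n : ℤ) - 1), (n : ℤ) • x + t ∈ A}

/-- The set `A^{[n]} = n·A_{[n]} + [0, n-1]^d`. -/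
def superBlockSet (d : ℕ) (A : Set (Fin d → ℤ)) (n : ℕ) : Set (Fin d → ℤ) :=
  {w | ∃ x ∈ blockSet d A n,
    ∃ t ∈ Set.Icc (0 : Fin d → ℤ) (fun _ => (n : ℤ) - 1), w = (n : ℤ) • x + t}

/-- Upper asymptotic density of `A ⊆ ℤ^d`. -/
noncomputable def upperDensity (d : ℕ) (A : Set (Fin d → ℤ)) : ℝ :=
  limsup (fun n : ℕ => (Set.ncard (A ∩ cube d n) : ℝ) / (2 * (n : ℝ) + 1) ^ d) atTop

/-- Lower asymptotic density of `A ⊆ ℤ^d`. -/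
noncomputable def lowerDensity (d : ℕ) (A : Set (Fin d → ℤ)) : ℝ :=
  liminf (fun n : ℕ => (Set.ncard (A ∩ cube d n) : ℝ) / (2 * (n : ℝ) + 1) ^ d) atTop


/-!
Cut `ℤ^d` into the blocks `i • x + [0, i - 1]^d`. A point `z ∈ A` whose `k`-cube is not contained
in `A` either lies within distance `k` of the boundary of its block, a layer of density at most
`2dk/i`, or its `k`-cube meets a point of its own block that is missing from `A`, i.e. a point of
`A^{[i]} \ A`; such a point is charged by at most `(2k+1)^d` values of `z`. The density of
`A^{[i]} \ A` is at most `d̄(A^{[i]}) - α`, which tends to `0` as `i → ∞`.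
-/

open Finset

def cubeInterior (d k : ℕ) (A : Set (Fin d → ℤ)) : Set (Fin d → ℤ) := {z | cubeAt d k z ⊆ A}

lemma mem_cubeAt {d k : ℕ} {z w : Fin d → ℤ} :
    w ∈ cubeAt d k z ↔ ∀ j, z j - k ≤ w j ∧ w j ≤ z j + k := by
  simp only [cubeAt, Set.mem_Icc, Pi.le_def, forall_and]

lemma mem_cubeAt_comm {d k : ℕ} {z w : Fin d → ℤ} : w ∈ cubeAt d k z ↔ z ∈ cubeAt d k w := by
  simp only [mem_cubeAt]
  exact forall_congr' fun j => by omega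

lemma cube_eq_cubeAt_zero (d m : ℕ) : cube d m = cubeAt d m 0 := by
  simp [cube, cubeAt]

lemma mem_cube {d m : ℕ} {z : Fin d → ℤ} : z ∈ cube d m ↔ ∀ j, -(m : ℤ) ≤ z j ∧ z j ≤ m := by
  simp [cube_eq_cubeAt_zero, mem_cubeAt]

lemma ncard_cubeAt (d k : ℕ) (z : Fin d → ℤ) : (cubeAt d k z).ncard = (2 * k + 1) ^ d := by
  rw [cubeAt, ← coe_Icc, Set.ncard_coe_finset, Pi.card_Icc]
  simp only [Int.card_Icc]
  rw [prod_congr rfl fun j _ => show (z j + k + 1 - (z j - k)).toNat = 2 * k + 1 by omega]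
  simp

lemma cube_finite (d m : ℕ) : (cube d m).Finite := Set.finite_Icc _ _

lemma ncard_inter_cube_le (d n : ℕ) (B : Set (Fin d → ℤ)) :
    (B ∩ cube d n).ncard ≤ (2 * n + 1) ^ d := by
  simpa [cube_eq_cubeAt_zero, ncard_cubeAt] using
    Set.ncard_inter_le_ncard_right B (cube d n) (cube_finite d n)

lemma Int.ediv_eq_ediv_of_emod_margin {a b i k : ℤ} (hi : 0 < i) (hk : k ≤ a % i)
    (hki : a % i + k < i) (hab : a - k ≤ b) (hba : b ≤ a + k) : b / i = a / i := by
  have := Int.mul_ediv_add_emod a i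
  rw [Int.ediv_eq_iff_of_pos hi]
  constructor <;> linarith

lemma mem_superBlockSet_of_ediv_eq {d i : ℕ} (hi : 0 < i) {A : Set (Fin d → ℤ)}
    {z w : Fin d → ℤ} (hz : z ∈ A) (hzw : ∀ j, w j / i = z j / i) :
    w ∈ superBlockSet d A i := by
  have hi' : (0 : ℤ) < i := by exact_mod_cast hi
  have emod_mem (v : Fin d → ℤ) :
      (fun j => v j % (i : ℤ)) ∈ Set.Icc (0 : Fin d → ℤ) (fun _ => (i : ℤ) - 1) :=
    ⟨fun j => Int.emod_nonneg _ hi'.ne', fun j => by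
      have := Int.emod_lt_of_pos (v j) hi'; simp only; omega⟩
  have decomp (v : Fin d → ℤ) :
      (i : ℤ) • (fun j => v j / (i : ℤ)) + (fun j => v j % (i : ℤ)) = v :=
    funext fun j => Int.mul_ediv_add_emod (v j) i
  refine ⟨fun j => z j / i, ⟨_, emod_mem z, by rwa [decomp]⟩, _, emod_mem w, ?_⟩
  simp_rw [← hzw, decomp]

lemma subset_superBlockSet {d i : ℕ} (hi : 0 < i) (A : Set (Fin d → ℤ)) :
    A ⊆ superBlockSet d A i :=
  fun _ hz => mem_superBlockSet_of_ediv_eq hi hz fun _ => rfl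

lemma card_filter_emod_le (n i : ℕ) (hi : 0 < i) (p : ℤ → Prop) [DecidablePred p] :
    #{a ∈ Icc (-(n : ℤ)) n | p (a % i)} ≤ #{r ∈ Ico (0 : ℤ) i | p r} * (2 * (n / i) + 2) := by
  have hi' : (0 : ℤ) < i := by exact_mod_cast hi
  have hq : ((n : ℤ) / i) = ((n / i : ℕ) : ℤ) := (Int.natCast_ediv n i).symm
  calc #{a ∈ Icc (-(n : ℤ)) n | p (a % i)}
      ≤ #({r ∈ Ico (0 : ℤ) i | p r} ×ˢ Icc (-((n : ℤ) / i) - 1) ((n : ℤ) / i)) := by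
        refine card_le_card_of_injOn (fun a => (a % i, a / i)) (fun a ha => ?_)
          (fun a _ b _ h => ?_)
        · simp only [coe_filter, mem_Icc, Set.mem_ofPred_eq] at ha
          have := Int.mul_ediv_add_emod (n : ℤ) i
          have := Int.emod_lt_of_pos (n : ℤ) hi'
          simp only [coe_product, coe_filter, mem_Ico, coe_Icc, Set.mem_prod, Set.mem_ofPred_eq,
            Set.mem_Icc]
          refine ⟨⟨⟨Int.emod_nonneg _ hi'.ne', Int.emod_lt_of_pos _ hi'⟩, ha.2⟩,
            (Int.le_ediv_iff_mul_le hi').2 (by nlinarith), Int.ediv_le_ediv hi' ha.1.2⟩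
        · simp only [Prod.mk.injEq] at h
          rw [← Int.mul_ediv_add_emod a i, ← Int.mul_ediv_add_emod b i, h.1, h.2]
    _ = #{r ∈ Ico (0 : ℤ) i | p r} * (2 * (n / i) + 2) := by
        rw [card_product, Int.card_Icc, hq]
        congr 1
        omega

lemma card_residues_outside_margin_le (k i : ℕ) :
    #{r ∈ Ico (0 : ℤ) i | ¬((k : ℤ) ≤ r ∧ r + k < i)} ≤ 2 * k := by
  calc #{r ∈ Ico (0 : ℤ) i | ¬((k : ℤ) ≤ r ∧ r + k < i)}
      ≤ #(Ico (0 : ℤ) k ∪ Ico ((i : ℤ) - k) i) := by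
        refine card_le_card fun r hr => ?_
        simp only [mem_filter, mem_Ico, mem_union] at hr ⊢
        omega
    _ ≤ 2 * k := by
        refine (card_union_le _ _).trans ?_
        simp only [Int.card_Ico]
        omega

lemma ncard_cube_filter_coord {d : ℕ} (n : ℕ) (j : Fin d) (p : ℤ → Prop) [DecidablePred p] :
    {z ∈ cube d n | p (z j)}.ncard = #{a ∈ Icc (-(n : ℤ)) n | p a} * (2 * n + 1) ^ (d - 1) := by
  have hset : {z ∈ cube d n | p (z j)} =
      ↑(Fintype.piFinset (Function.update (fun _ => Icc (-(n : ℤ)) n) j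
        {a ∈ Icc (-(n : ℤ)) n | p a})) := by
    ext z
    simp only [Set.mem_ofPred_eq, mem_cube, mem_coe, Fintype.mem_piFinset]
    constructor
    · rintro ⟨hz, hp⟩ l
      rcases eq_or_ne l j with rfl | hl
      · simp [hz l, hp]
      · simp [hl, hz l]
    · intro hz
      have hj : (-(n : ℤ) ≤ z j ∧ z j ≤ n) ∧ p (z j) := by simpa using hz j
      refine ⟨fun l => ?_, hj.2⟩
      rcases eq_or_ne l j with rfl | hl
      · exact hj.1
      · simpa [hl] using hz l
  rw [hset, Set.ncard_coe_finset, Fintype.card_piFinset, ← mul_prod_erase univ _ (mem_univ j),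
    Function.update_self,
    prod_congr rfl fun l hl => by rw [Function.update_of_ne (ne_of_mem_erase hl)],
    prod_const, card_erase_of_mem (mem_univ j), card_univ, Fintype.card_fin, Int.card_Icc]
  congr 2
  omega

lemma Set.ncard_le_mul_ncard_of_forall_exists {α β : Type*} {s : Set α} {t : Set β}
    (hs : s.Finite) (ht : t.Finite) (r : α → β → Prop) {m : ℕ}
    (hst : ∀ a ∈ s, ∃ b ∈ t, r a b) (hts : ∀ b ∈ t, {a ∈ s | r a b}.ncard ≤ m) :
    s.ncard ≤ m * t.ncard := by
  classical
  have h := card_mul_le_card_mul r (s := hs.toFinset) (t := ht.toFinset) (m := 1) (n := m)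
    (fun a ha => ?_) (fun b hb => ?_)
  · rw [Set.ncard_eq_toFinset_card s hs, Set.ncard_eq_toFinset_card t ht, mul_comm]
    simpa using h
  · obtain ⟨b, hb, hab⟩ := hst a (by simpa using ha)
    exact card_pos.2 ⟨b, by simp [bipartiteAbove, hb, hab]⟩
  · rw [← Set.ncard_coe_finset]
    convert hts b (by simpa using hb) using 2
    ext
    simp [bipartiteBelow]

lemma ncard_holes_le {d k i : ℕ} (hi : 0 < i) (A : Set (Fin d → ℤ)) (n : ℕ) :
    {z ∈ A ∩ cube d n | (∀ j, (k : ℤ) ≤ z j % i ∧ z j % i + k < i) ∧ z ∉ cubeInterior d k A}.ncard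
      ≤ (2 * k + 1) ^ d * ((superBlockSet d A i \ A) ∩ cube d (n + k)).ncard := by
  refine Set.ncard_le_mul_ncard_of_forall_exists ((cube_finite d n).subset fun z hz => hz.1.2)
    ((cube_finite d (n + k)).subset Set.inter_subset_right) (fun z w => w ∈ cubeAt d k z)
    (fun z ⟨⟨hzA, hzn⟩, hdeep, hzC⟩ => ?_) (fun w _ => ?_)
  · obtain ⟨w, hw, hwA⟩ := Set.not_subset.1 hzC
    rw [mem_cubeAt] at hw
    refine ⟨w, ⟨⟨mem_superBlockSet_of_ediv_eq hi hzA fun j => ?_, hwA⟩, ?_⟩,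
      mem_cubeAt.2 hw⟩
    · exact Int.ediv_eq_ediv_of_emod_margin (by exact_mod_cast hi) (hdeep j).1 (hdeep j).2 (hw j).1 (hw j).2
    · rw [mem_cube] at hzn ⊢
      intro j
      have := hw j
      have := hzn j
      push_cast
      omega
  · calc {z ∈ _ | w ∈ cubeAt d k z}.ncard ≤ (cubeAt d k w).ncard :=
          Set.ncard_le_ncard (fun z hz => mem_cubeAt_comm.1 hz.2) (Set.finite_Icc _ _)
      _ = (2 * k + 1) ^ d := ncard_cubeAt d k w

lemma ncard_inter_cube_le_cubeInterior {d k i : ℕ} (hi : 0 < i)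
    (A : Set (Fin d → ℤ)) (n : ℕ) :
    (A ∩ cube d n).ncard ≤ (cubeInterior d k A ∩ cube d n).ncard
      + ∑ j, {z ∈ cube d n | ¬((k : ℤ) ≤ z j % i ∧ z j % i + k < i)}.ncard
      + (2 * k + 1) ^ d * ((superBlockSet d A i \ A) ∩ cube d (n + k)).ncard := by
  set core := cubeInterior d k A ∩ cube d n
  set strips := ⋃ j, {z ∈ cube d n | ¬((k : ℤ) ≤ z j % i ∧ z j % i + k < i)}
  set holes :=
    {z ∈ A ∩ cube d n | (∀ j, (k : ℤ) ≤ z j % i ∧ z j % i + k < i) ∧ z ∉ cubeInterior d k A}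
  have hcover : A ∩ cube d n ⊆ core ∪ strips ∪ holes := by
    intro z hz
    by_cases hcore : z ∈ cubeInterior d k A
    · exact Or.inl (Or.inl ⟨hcore, hz.2⟩)
    by_cases hdeep : ∀ j, (k : ℤ) ≤ z j % i ∧ z j % i + k < i
    · exact Or.inr ⟨hz, hdeep, hcore⟩
    · obtain ⟨j, hj⟩ := not_forall.1 hdeep
      exact Or.inl (Or.inr (Set.mem_iUnion.2 ⟨j, hz.2, hj⟩))
  have hfin : (core ∪ strips ∪ holes).Finite :=
    (cube_finite d n).subset (Set.union_subset (Set.union_subset Set.inter_subset_right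
      (Set.iUnion_subset fun _ _ hz => hz.1)) fun _ hz => hz.1.2)
  calc (A ∩ cube d n).ncard ≤ (core ∪ strips ∪ holes).ncard := Set.ncard_le_ncard hcover hfin
    _ ≤ core.ncard + strips.ncard + holes.ncard :=
        (Set.ncard_union_le _ _).trans (Nat.add_le_add_right (Set.ncard_union_le _ _) _)
    _ ≤ _ := by
        gcongr
        exacts [Set.ncard_iUnion_le_of_fintype _, ncard_holes_le hi A n]

noncomputable def cubeDensity (d : ℕ) (B : Set (Fin d → ℤ)) (n : ℕ) : ℝ :=
  (Set.ncard (B ∩ cube d n) : ℝ) / (2 * (n : ℝ) + 1) ^ d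

lemma cubeDensity_nonneg (d : ℕ) (B : Set (Fin d → ℤ)) (n : ℕ) : 0 ≤ cubeDensity d B n := by
  unfold cubeDensity
  positivity

lemma cubeDensity_le_one (d : ℕ) (B : Set (Fin d → ℤ)) (n : ℕ) : cubeDensity d B n ≤ 1 := by
  rw [cubeDensity, div_le_one (by positivity)]
  exact_mod_cast ncard_inter_cube_le d n B

lemma eventually_cubeDensity_lt {d : ℕ} {B : Set (Fin d → ℤ)} {a : ℝ} (h : upperDensity d B < a) :
    ∀ᶠ n in atTop, cubeDensity d B n < a :=
  eventually_lt_of_limsup_lt h (isBoundedUnder_of ⟨1, cubeDensity_le_one d B⟩)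

lemma eventually_lt_cubeDensity {d : ℕ} {B : Set (Fin d → ℤ)} {a : ℝ} (h : a < lowerDensity d B) :
    ∀ᶠ n in atTop, a < cubeDensity d B n :=
  eventually_lt_of_lt_liminf h (isBoundedUnder_of ⟨0, cubeDensity_nonneg d B⟩)

lemma le_lowerDensity_of_eventually {d : ℕ} {B : Set (Fin d → ℤ)} {a : ℝ}
    (h : ∀ᶠ n in atTop, a ≤ cubeDensity d B n) : a ≤ lowerDensity d B :=
  le_liminf_of_le (isBoundedUnder_of ⟨1, cubeDensity_le_one d B⟩).isCoboundedUnder_ge h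

lemma ncard_strip_le {d k i : ℕ} (hi : 0 < i) (n : ℕ) (j : Fin d) :
    ({z ∈ cube d n | ¬((k : ℤ) ≤ z j % i ∧ z j % i + k < i)}.ncard : ℝ)
      ≤ (2 * k / i + 4 * k / (2 * n + 1)) * (2 * n + 1) ^ d := by
  have hslice := ncard_cube_filter_coord n j fun a => ¬((k : ℤ) ≤ a % i ∧ a % i + k < i)
  beta_reduce at hslice
  have hline : #{a ∈ Icc (-(n : ℤ)) n | ¬((k : ℤ) ≤ a % i ∧ a % i + k < i)}
      ≤ 2 * k * (2 * (n / i) + 2) :=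
    (card_filter_emod_le n i hi _).trans
      (Nat.mul_le_mul_right _ (card_residues_outside_margin_le k i))
  have hquot : (4 * k : ℝ) * (n / i : ℕ) ≤ 2 * k / i * (2 * n + 1) - 2 * k / i := by
    calc (4 * k : ℝ) * (n / i : ℕ) ≤ 4 * k * (n / i) := by gcongr; exact Nat.cast_div_le
      _ = _ := by ring
  have hk : (0 : ℝ) ≤ 2 * k / i := by positivity
  rw [hslice, ← pow_sub_one_mul j.pos.ne', mul_comm _ (2 * (n : ℝ) + 1), ← mul_assoc]
  push_cast
  gcongr
  calc (#{a ∈ Icc (-(n : ℤ)) n | ¬((k : ℤ) ≤ a % i ∧ a % i + k < i)} : ℝ)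
      ≤ 2 * k * (2 * (n / i : ℕ) + 2) := by exact_mod_cast hline
    _ ≤ (2 * k / i + 4 * k / (2 * n + 1)) * (2 * n + 1) := by
        rw [add_mul, div_mul_cancel₀ _ (by positivity)]
        linarith

lemma ncard_superBlockSet_diff_le {d k i : ℕ} (hi : 0 < i) (A : Set (Fin d → ℤ)) (n : ℕ) :
    (((superBlockSet d A i \ A) ∩ cube d (n + k)).ncard : ℝ)
      ≤ (2 * k + 1) ^ d * (cubeDensity d (superBlockSet d A i) (n + k)
        - cubeDensity d A (n + k)) * (2 * n + 1) ^ d := by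
  set N : ℝ := (2 * ((n + k : ℕ) : ℝ) + 1) ^ d
  have hN : 0 < N := by positivity
  have hsub : A ∩ cube d (n + k) ⊆ superBlockSet d A i ∩ cube d (n + k) :=
    Set.inter_subset_inter_left _ (subset_superBlockSet hi A)
  have hfin : (superBlockSet d A i ∩ cube d (n + k)).Finite :=
    (cube_finite d (n + k)).subset Set.inter_subset_right
  have hdiff : (((superBlockSet d A i \ A) ∩ cube d (n + k)).ncard : ℝ)
      = (cubeDensity d (superBlockSet d A i) (n + k) - cubeDensity d A (n + k)) * N := by
    rw [Set.inter_sdiff_distrib_right, Set.ncard_sdiff hsub (hfin.subset hsub),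
      Nat.cast_sub (Set.ncard_le_ncard hsub hfin), cubeDensity, cubeDensity, ← sub_div,
      div_mul_cancel₀ _ hN.ne']
  have hgap : 0 ≤ cubeDensity d (superBlockSet d A i) (n + k) - cubeDensity d A (n + k) :=
    nonneg_of_mul_nonneg_left (hdiff ▸ Nat.cast_nonneg _) hN
  have hshift : N ≤ (2 * k + 1) ^ d * (2 * n + 1) ^ d := by
    rw [← mul_pow]
    unfold N
    gcongr
    push_cast
    nlinarith [n.cast_nonneg (α := ℝ), k.cast_nonneg (α := ℝ)]
  calc _ = (cubeDensity d (superBlockSet d A i) (n + k) - cubeDensity d A (n + k)) * N := hdiff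
    _ ≤ (cubeDensity d (superBlockSet d A i) (n + k) - cubeDensity d A (n + k))
        * ((2 * k + 1) ^ d * (2 * n + 1) ^ d) := mul_le_mul_of_nonneg_left hshift hgap
    _ = _ := by ring

lemma cubeDensity_le_cubeInterior {d k i : ℕ} (hi : 0 < i) (A : Set (Fin d → ℤ))
    (n : ℕ) :
    cubeDensity d A n ≤ cubeDensity d (cubeInterior d k A) n
      + d * (2 * k / i + 4 * k / (2 * n + 1))
      + (2 * k + 1) ^ (2 * d) * (cubeDensity d (superBlockSet d A i) (n + k)
        - cubeDensity d A (n + k)) := by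
  set N : ℝ := (2 * n + 1) ^ d
  have hN : 0 < N := by positivity
  have hcount : ((A ∩ cube d n).ncard : ℝ) ≤ (cubeInterior d k A ∩ cube d n).ncard
      + ∑ j, ({z ∈ cube d n | ¬((k : ℤ) ≤ z j % i ∧ z j % i + k < i)}.ncard : ℝ)
      + (2 * k + 1) ^ d * ((superBlockSet d A i \ A) ∩ cube d (n + k)).ncard := by
    exact_mod_cast ncard_inter_cube_le_cubeInterior hi A n
  have hstrips : ∑ j, ({z ∈ cube d n | ¬((k : ℤ) ≤ z j % i ∧ z j % i + k < i)}.ncard : ℝ)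
      ≤ d * (2 * k / i + 4 * k / (2 * n + 1)) * N := by
    refine (sum_le_sum fun j _ => ncard_strip_le hi n j).trans_eq ?_
    rw [sum_const, card_univ, Fintype.card_fin, nsmul_eq_mul, mul_assoc]
  have hholes := ncard_superBlockSet_diff_le (k := k) hi A n
  rw [cubeDensity, cubeDensity, div_le_iff₀ hN]
  calc ((A ∩ cube d n).ncard : ℝ)
      ≤ (cubeInterior d k A ∩ cube d n).ncard + d * (2 * k / i + 4 * k / (2 * n + 1)) * N
        + (2 * k + 1) ^ d * ((2 * k + 1) ^ d * (cubeDensity d (superBlockSet d A i) (n + k)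
          - cubeDensity d A (n + k)) * N) := by
        refine hcount.trans (add_le_add (add_le_add_right hstrips _) ?_)
        exact mul_le_mul_of_nonneg_left hholes (by positivity)
    _ = _ := by
        rw [pow_mul']
        field_simp
        ring

lemma eventually_div_two_mul_add_one_lt (c : ℝ) {η : ℝ} (hη : 0 < η) :
    ∀ᶠ n : ℕ in atTop, c / (2 * n + 1) < η :=
  (tendsto_const_nhds.div_atTop (tendsto_atTop_add_const_right _ 1
    (tendsto_natCast_atTop_atTop.const_mul_atTop two_pos))).eventually (gt_mem_nhds hη)

lemma lowerDensity_cubeInterior_ge {d k i : ℕ} (hi : 0 < i) (A : Set (Fin d → ℤ)) :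
    lowerDensity d A - d * (2 * k / i)
        - (2 * k + 1) ^ (2 * d) * (upperDensity d (superBlockSet d A i) - lowerDensity d A)
      ≤ lowerDensity d (cubeInterior d k A) := by
  set α := lowerDensity d A
  set U := upperDensity d (superBlockSet d A i)
  set K : ℝ := (2 * k + 1) ^ (2 * d) with hK
  refine le_of_forall_sub_le fun ε hε => ?_
  set η := ε / (2 + 2 * K)
  have hη : 0 < η := by positivity
  have hεη : ε = (2 + 2 * K) * η := (mul_div_cancel₀ ε (by positivity)).symm
  have hαA : α - η < lowerDensity d A := sub_lt_self α hη
  have hUη : upperDensity d (superBlockSet d A i) < U + η := lt_add_of_pos_right U hη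
  refine le_lowerDensity_of_eventually ?_
  filter_upwards [eventually_lt_cubeDensity hαA,
    (tendsto_add_atTop_nat k).eventually (eventually_lt_cubeDensity hαA),
    (tendsto_add_atTop_nat k).eventually (eventually_cubeDensity_lt hUη),
    eventually_div_two_mul_add_one_lt (d * (4 * k)) hη] with n hAn hAnk hUnk hstrip
  have hkey := cubeDensity_le_cubeInterior (k := k) hi A n
  rw [← hK, mul_add] at hkey
  rw [mul_div_assoc] at hstrip
  have hholes : K * (cubeDensity d (superBlockSet d A i) (n + k) - cubeDensity d A (n + k))
      ≤ K * (U - α + 2 * η) := mul_le_mul_of_nonneg_left (by linarith) (by positivity)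
  linarith

theorem stmt_7_general (d : ℕ) (A : Set (Fin d → ℤ)) (α : ℝ)
    (hA : lowerDensity d A = α)
    (hlim : Tendsto (fun i : ℕ => upperDensity d (superBlockSet d A i)) atTop (nhds α)) :
    ∀ k : ℕ, α ≤ lowerDensity d {z : Fin d → ℤ | cubeAt d k z ⊆ A} := by
  intro k
  have hbound : Tendsto (fun i : ℕ => α - d * (2 * k / i)
      - (2 * k + 1) ^ (2 * d) * (upperDensity d (superBlockSet d A i) - α)) atTop (nhds α) := by
    simpa using (tendsto_const_nhds.sub
      ((tendsto_const_div_atTop_nhds_zero_nat _).const_mul _)).sub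
      ((hlim.sub_const α).const_mul ((2 * k + 1 : ℝ) ^ (2 * d)))
  refine le_of_tendsto hbound ?_
  filter_upwards [eventually_gt_atTop 0] with i hi
  exact hA ▸ lowerDensity_cubeInterior_ge hi A

theorem stmt_7 (d : ℕ) (hd : 1 ≤ d) (A : Set (Fin d → ℤ)) (α : ℝ)
    (hA : lowerDensity d A = α) (hα : 0 < α)
    (hlim : Tendsto (fun i : ℕ => upperDensity d (superBlockSet d A i)) atTop (nhds α)) :
    ∀ k : ℕ, α ≤ lowerDensity d {z : Fin d → ℤ | cubeAt d k z ⊆ A} :=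
  stmt_7_general d A α hA hlim
end

section
/- There exists a set C ⊆ ℕ with lower density d_(C) > 0 such that lim_{i→∞} d_(C_{[i]}) = d_(C), yet C is not lower thick of level β for any β > 0; that is, for every β > 0 there exists k ∈ ℕ such that the lower density of {z ∈ ℕ : [z − k, z + k] ⊆ C} is strictly less than β. -/
/-!
Cut ℕ at `N t = 4 ^ (t * t)`. On `[N t, N (t + 1))` the set `C` consists of the even numbers
when `t` is even, and of the lower half `[N t, (N t + N (t + 1)) / 2)` when `t` is odd. Every
initial segment of ℕ is then at least half filled by `C`, exactly half at each `N t`, so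
`d_(C) = 1/2`. Blocks of length `i` cover `C`, which gives `d_(C) ≤ d_(C_[i])` in general; at the
end of an odd stretch no block of `C_[i]` meets the empty upper half, and since
`N t / N (t + 1) → 0` this forces `d_(C_[i]) ≤ 1/2`. Finally, no two consecutive integers of an
even stretch lie in `C`, so the points `z` with `[z - 1, z + 1] ⊆ C` below `N (t + 1)`, `t` even,
lie below `N t`: they have lower density `0`.
-/

open Filter

/-- Lower asymptotic density of a set of (positive) natural numbers,
computed on the initial segments `[1, n]`. -/
noncomputable def lowerDensityNat (A : Set ℕ) : ℝ :=
  liminf (fun n : ℕ => (Set.ncard (A ∩ Set.Icc 1 n) : ℝ) / n) atTop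

/-- The `n`-block set `A_{[n]} = {x ≥ 0 : [n·x, n·x + n - 1] ∩ A ≠ ∅}`. -/
def blockSetNat (A : Set ℕ) (n : ℕ) : Set ℕ :=
  {x : ℕ | ∃ y ∈ A, n * x ≤ y ∧ y ≤ n * x + n - 1}

open Topology

lemma ncard_inter_Icc_one_le (A : Set ℕ) (n : ℕ) : (A ∩ Set.Icc 1 n).ncard ≤ n := by
  simpa using Set.ncard_le_ncard Set.inter_subset_right (Set.finite_Icc 1 n)

lemma isBoundedUnder_ge_density {A : Set ℕ} :
    IsBoundedUnder (· ≥ ·) atTop fun n : ℕ => ((A ∩ Set.Icc 1 n).ncard : ℝ) / n :=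
  isBoundedUnder_of ⟨0, fun n => by positivity⟩

lemma isBoundedUnder_le_density {A : Set ℕ} (l : Filter ℕ) :
    IsBoundedUnder (· ≤ ·) l fun n : ℕ => ((A ∩ Set.Icc 1 n).ncard : ℝ) / n :=
  isBoundedUnder_of ⟨1, fun n => div_le_one_of_le₀ (mod_cast ncard_inter_Icc_one_le A n)
    n.cast_nonneg⟩

lemma le_lowerDensityNat_of_eventually {A : Set ℕ} {a c : ℝ}
    (h : ∀ᶠ n : ℕ in atTop, a * n - c ≤ (A ∩ Set.Icc 1 n).ncard) : a ≤ lowerDensityNat A := by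
  have hlim : Tendsto (fun n : ℕ => a - c / n) atTop (𝓝 a) := by
    simpa using tendsto_const_nhds.sub (tendsto_const_div_atTop_nhds_zero_nat c)
  rw [← hlim.liminf_eq]
  refine liminf_le_liminf ?_ hlim.isBoundedUnder_ge
    (isBoundedUnder_le_density atTop).isCoboundedUnder_ge
  filter_upwards [h, eventually_gt_atTop 0] with n hn hn0
  rw [le_div_iff₀ (by positivity), sub_mul, div_mul_cancel₀ _ (by positivity)]
  exact hn

lemma lowerDensityNat_le_of_tendsto {A : Set ℕ} {m : ℕ → ℕ} {g : ℕ → ℝ} {a : ℝ}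
    (hm : Tendsto m atTop atTop) (hg : Tendsto g atTop (𝓝 a))
    (h : ∀ᶠ t in atTop, ((A ∩ Set.Icc 1 (m t)).ncard : ℝ) ≤ g t * m t) :
    lowerDensityNat A ≤ a := by
  calc lowerDensityNat A ≤ liminf (fun t => ((A ∩ Set.Icc 1 (m t)).ncard : ℝ) / m t) atTop :=
        hm.liminf_le_liminf_comp (isBoundedUnder_le_density _).isCoboundedUnder_ge
          isBoundedUnder_ge_density
    _ ≤ liminf g atTop := by
        refine liminf_le_liminf ?_ (isBoundedUnder_of ⟨0, fun t => by positivity⟩)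
          hg.isBoundedUnder_le.isCoboundedUnder_ge
        filter_upwards [h, hm.eventually_gt_atTop 0] with t ht ht0
        rwa [div_le_iff₀ (by positivity)]
    _ = a := hg.liminf_eq

lemma ncard_inter_Icc_le_mul_blockSetNat (A : Set ℕ) (i m : ℕ) :
    (A ∩ Set.Icc 1 (i * m)).ncard ≤ i * ((blockSetNat A i ∩ Set.Icc 1 m).ncard + 1) := by
  classical
  set T := (Finset.range (m + 1)).filter (· ∈ blockSetNat A i)
  have hcover : A ∩ Set.Icc 1 (i * m) ⊆ ⋃ x ∈ T, Set.Ico (i * x) (i * x + i) := by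
    rintro y ⟨hyA, hy1, hym⟩
    have hi : 0 < i := Nat.pos_of_ne_zero fun h => by simp [h] at hym; omega
    have hdiv := Nat.div_add_mod y i
    have hmod := Nat.mod_lt y hi
    refine Set.mem_biUnion (x := y / i) ?_ ⟨by omega, by omega⟩
    simp only [T, Finset.coe_filter, Finset.mem_range, Set.mem_ofPred_eq]
    exact ⟨Nat.lt_succ_of_le (Nat.div_le_of_le_mul hym), y, hyA, by omega, by omega⟩
  have hT : (T : Set ℕ) ⊆ insert 0 (blockSetNat A i ∩ Set.Icc 1 m) := by
    intro x hx
    simp only [T, Finset.coe_filter, Finset.mem_range, Set.mem_ofPred_eq] at hx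
    rcases Nat.eq_zero_or_pos x with rfl | hx0
    · exact Set.mem_insert _ _
    · exact Set.mem_insert_of_mem _ ⟨hx.2, hx0, by omega⟩
  calc (A ∩ Set.Icc 1 (i * m)).ncard
      ≤ (⋃ x ∈ T, Set.Ico (i * x) (i * x + i)).ncard :=
        Set.ncard_le_ncard hcover (T.finite_toSet.biUnion fun _ _ => Set.finite_Ico _ _)
    _ ≤ ∑ x ∈ T, (Set.Ico (i * x) (i * x + i)).ncard := T.set_ncard_biUnion_le _
    _ = i * T.card := by simp [mul_comm]
    _ ≤ i * ((blockSetNat A i ∩ Set.Icc 1 m).ncard + 1) := by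
        gcongr
        rw [← Set.ncard_coe_finset]
        exact (Set.ncard_le_ncard hT (((Set.finite_Icc 1 m).inter_of_right _).insert 0)).trans
          (Set.ncard_insert_le _ _)

lemma lowerDensityNat_le_lowerDensityNat_blockSetNat (A : Set ℕ) {i : ℕ} (hi : 0 < i) :
    lowerDensityNat A ≤ lowerDensityNat (blockSetNat A i) := by
  refine le_of_forall_lt_imp_le_of_dense fun a ha => le_lowerDensityNat_of_eventually (c := 1) ?_
  have hA : ∀ᶠ n : ℕ in atTop, a < ((A ∩ Set.Icc 1 n).ncard : ℝ) / n :=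
    eventually_lt_of_lt_liminf ha isBoundedUnder_ge_density
  have hmul : Tendsto (fun m : ℕ => i * m) atTop atTop := tendsto_id.const_mul_atTop' hi
  filter_upwards [hmul.eventually hA, eventually_gt_atTop 0] with m hm hm0
  have hcount : ((A ∩ Set.Icc 1 (i * m)).ncard : ℝ)
      ≤ i * ((blockSetNat A i ∩ Set.Icc 1 m).ncard + 1) := mod_cast
    ncard_inter_Icc_le_mul_blockSetNat A i m
  rw [lt_div_iff₀ (by positivity)] at hm
  push_cast at hm
  have hscaled : (i : ℝ) * (a * m) < i * ((blockSetNat A i ∩ Set.Icc 1 m).ncard + 1) := by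
    linarith
  linarith [lt_of_mul_lt_mul_left hscaled (Nat.cast_nonneg i)]

lemma ncard_inter_Icc_one_add_one_eq_count {A : Set ℕ} [DecidablePred (· ∈ A)] (h0 : 0 ∈ A)
    (n : ℕ) : (A ∩ Set.Icc 1 n).ncard + 1 = Nat.count (· ∈ A) (n + 1) := by
  have himage : A ∩ Set.Icc 1 n =
      (· + 1) '' ((Finset.range n).filter fun k => k + 1 ∈ A : Finset ℕ) := by
    ext x
    simp only [Set.mem_inter_iff, Set.mem_Icc, Finset.coe_filter, Finset.mem_range,
      Set.mem_image, Set.mem_ofPred_eq]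
    constructor
    · rintro ⟨hx, h1, hn⟩
      exact ⟨x - 1, ⟨by omega, by rwa [Nat.sub_add_cancel h1]⟩, by omega⟩
    · rintro ⟨k, ⟨hk, hkA⟩, rfl⟩
      exact ⟨hkA, by omega, by omega⟩
  rw [Nat.count_succ', if_pos h0, himage, Set.ncard_image_of_injective _ (add_left_injective 1),
    Set.ncard_coe_finset, Nat.count_eq_card_filter_range]

lemma mem_of_Icc_subset_image {A : Set ℕ} {z k y : ℕ}
    (h : Set.Icc ((z : ℤ) - k) ((z : ℤ) + k) ⊆ (fun c : ℕ => (c : ℤ)) '' A)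
    (hy₁ : z ≤ y + k) (hy₂ : y ≤ z + k) : y ∈ A := by
  obtain ⟨c, hc, hcy⟩ := h (a := (y : ℤ)) ⟨by omega, by omega⟩
  exact Nat.cast_injective hcy ▸ hc

lemma ncard_blockSetNat_inter_Icc_le {A : Set ℕ} {i K M : ℕ} (hi : 0 < i)
    (hgap : ∀ y ∈ A, y < M → y < K) :
    (blockSetNat A i ∩ Set.Icc 1 (M / i - 1)).ncard ≤ K / i := by
  have hsub : blockSetNat A i ∩ Set.Icc 1 (M / i - 1) ⊆ Set.Icc 1 (K / i) := by
    rintro x ⟨⟨y, hyA, hxy, hyx⟩, hx1, hxM⟩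
    have hblock : i * (x + 1) ≤ M :=
      (Nat.mul_le_mul_left i (by omega : x + 1 ≤ M / i)).trans (Nat.mul_div_le M i)
    have hyK : y < K := hgap y hyA (by rw [mul_add_one] at hblock; omega)
    exact ⟨hx1, (Nat.le_div_iff_mul_le hi).2 (by rw [mul_comm]; omega)⟩
  simpa using Set.ncard_le_ncard hsub (Set.finite_Icc _ _)

lemma StrictMono.exists_le_lt_succ {f : ℕ → ℕ} (hf : StrictMono f) {m : ℕ} (hm : f 0 ≤ m) :
    ∃ t, f t ≤ m ∧ m < f (t + 1) := by
  induction m, hm using Nat.le_induction with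
  | base => exact ⟨0, le_rfl, hf Nat.zero_lt_one⟩
  | succ m _ ih =>
    obtain ⟨t, h₁, h₂⟩ := ih
    rcases (Nat.succ_le_of_lt h₂).lt_or_eq with h | h
    · exact ⟨t, by omega, h⟩
    · exact ⟨t + 1, h.ge, by rw [show m + 1 = f (t + 1) from h]; exact hf (Nat.lt_add_one _)⟩

lemma StrictMono.eq_of_le_lt_succ {f : ℕ → ℕ} (hf : StrictMono f) {m s t : ℕ}
    (hs : f s ≤ m ∧ m < f (s + 1)) (ht : f t ≤ m ∧ m < f (t + 1)) : s = t :=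
  le_antisymm (Nat.le_of_lt_succ (hf.lt_iff_lt.1 (hs.1.trans_lt ht.2)))
    (Nat.le_of_lt_succ (hf.lt_iff_lt.1 (ht.1.trans_lt hs.2)))

namespace Counterexample

def N (t : ℕ) : ℕ := 4 ^ (t * t)

def mid (t : ℕ) : ℕ := (N t + N (t + 1)) / 2

def C : Set ℕ :=
  {m | ∀ t, N t ≤ m → m < N (t + 1) → if Even t then Even m else m < mid t}

noncomputable instance : DecidablePred (· ∈ C) := Classical.decPred _

lemma N_strictMono : StrictMono N := fun _ _ h =>
  Nat.pow_lt_pow_right (by norm_num) (Nat.mul_self_lt_mul_self h)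

lemma N_pos (t : ℕ) : 0 < N t := pow_pos (by norm_num) _

lemma even_N {t : ℕ} (ht : t ≠ 0) : Even (N t) :=
  Nat.even_pow.2 ⟨by decide, by positivity⟩

lemma two_mul_mid {t : ℕ} (ht : t ≠ 0) : 2 * mid t = N t + N (t + 1) :=
  Nat.two_mul_div_two_of_even ((even_N ht).add (even_N t.succ_ne_zero))

lemma N_le_mid (t : ℕ) : N t ≤ mid t := by
  have := N_strictMono (Nat.lt_add_one t)
  unfold mid
  omega

lemma succ_mul_N_lt (t : ℕ) : (t + 1) * N t < N (t + 1) := by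
  have hN : N (t + 1) = 4 ^ (2 * t + 1) * N t := by
    simp only [N, ← pow_add]
    ring_nf
  rw [hN]
  exact Nat.mul_lt_mul_of_pos_right
    ((Nat.lt_pow_self (by norm_num)).trans_le (Nat.pow_le_pow_right (by norm_num) (by omega)))
    (N_pos t)

lemma mem_C_iff {t m : ℕ} (h₁ : N t ≤ m) (h₂ : m < N (t + 1)) :
    m ∈ C ↔ if Even t then Even m else m < mid t :=
  ⟨fun h => h t h₁ h₂, fun h _ hs₁ hs₂ => N_strictMono.eq_of_le_lt_succ ⟨hs₁, hs₂⟩ ⟨h₁, h₂⟩ ▸ h⟩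

lemma zero_mem_C : 0 ∈ C := fun t h => absurd h (N_pos t).not_ge

lemma count_C_N_add_of_even {t k : ℕ} (he : Even t) (hk : N t + k ≤ N (t + 1)) :
    Nat.count (· ∈ C) (N t + k)
      = Nat.count (· ∈ C) (N t) + ((N t + k + 1) / 2 - (N t + 1) / 2) := by
  induction k with
  | zero => simp
  | succ k ih =>
    rw [← add_assoc, Nat.count_succ, ih (by omega)]
    have hmem := mem_C_iff (t := t) (m := N t + k) (by omega) (by omega)
    rw [if_pos he, Nat.even_iff] at hmem
    by_cases h : N t + k ∈ C
    · rw [if_pos h]; have := hmem.1 h; omega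
    · rw [if_neg h]; have := mt hmem.2 h; omega

lemma count_C_N_add_of_odd {t k : ℕ} (ho : ¬Even t) (hk : N t + k ≤ N (t + 1)) :
    Nat.count (· ∈ C) (N t + k) = Nat.count (· ∈ C) (N t) + min k (mid t - N t) := by
  induction k with
  | zero => simp
  | succ k ih =>
    rw [← add_assoc, Nat.count_succ, ih (by omega)]
    have hmem := mem_C_iff (t := t) (m := N t + k) (by omega) (by omega)
    rw [if_neg ho] at hmem
    have := N_le_mid t
    by_cases h : N t + k ∈ C
    · rw [if_pos h]; have := hmem.1 h; omega
    · rw [if_neg h]; have := mt hmem.2 h; omega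

lemma count_C_N (t : ℕ) : Nat.count (· ∈ C) (N t) = (N t + 1) / 2 := by
  induction t with
  | zero => rw [show N 0 = 1 from rfl, Nat.count_one, if_pos zero_mem_C]
  | succ t ih =>
    have hlt := N_strictMono (Nat.lt_add_one t)
    by_cases he : Even t
    · have key := count_C_N_add_of_even he (k := N (t + 1) - N t) (by omega)
      rw [Nat.add_sub_cancel' hlt.le] at key
      rw [key, ih]
      omega
    · have ht : t ≠ 0 := by rintro rfl; exact he ⟨0, rfl⟩
      have key := count_C_N_add_of_odd he (k := N (t + 1) - N t) (by omega)
      rw [Nat.add_sub_cancel' hlt.le] at key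
      rw [key, ih]
      have := two_mul_mid ht
      have := Nat.even_iff.1 (even_N ht)
      have := Nat.even_iff.1 (even_N t.add_one_ne_zero)
      omega

lemma le_two_mul_count_C (n : ℕ) : n ≤ 2 * Nat.count (· ∈ C) n := by
  rcases Nat.eq_zero_or_pos n with rfl | hn
  · simp
  obtain ⟨t, h₁, h₂⟩ := N_strictMono.exists_le_lt_succ (m := n) hn
  have hk : N t + (n - N t) = n := by omega
  by_cases he : Even t
  · have key := count_C_N_add_of_even he (k := n - N t) (by omega)
    rw [hk] at key
    rw [key, count_C_N]
    omega
  · have ht : t ≠ 0 := by rintro rfl; exact he ⟨0, rfl⟩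
    have key := count_C_N_add_of_odd he (k := n - N t) (by omega)
    rw [hk] at key
    rw [key, count_C_N]
    have := two_mul_mid ht
    omega

lemma tendsto_two_mul_add_one_atTop : Tendsto (fun s : ℕ => 2 * s + 1) atTop atTop :=
  StrictMono.tendsto_atTop fun _ _ h => by omega

lemma tendsto_N_succ : Tendsto (fun t => N (t + 1)) atTop atTop :=
  N_strictMono.tendsto_atTop.comp (tendsto_add_atTop_nat 1)

lemma lowerDensityNat_C : lowerDensityNat C = 1 / 2 := by
  refine le_antisymm ?_ ?_
  · refine lowerDensityNat_le_of_tendsto (m := fun t => N (t + 1)) (g := fun _ => 1 / 2)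
      tendsto_N_succ tendsto_const_nhds (Eventually.of_forall fun t => ?_)
    have hcount := ncard_inter_Icc_one_add_one_eq_count zero_mem_C (N (t + 1))
    have hsucc := Nat.count_succ (· ∈ C) (N (t + 1))
    have hN := count_C_N (t + 1)
    have hNeven := Nat.even_iff.1 (even_N t.add_one_ne_zero)
    have hle : 2 * (C ∩ Set.Icc 1 (N (t + 1))).ncard ≤ N (t + 1) := by
      split_ifs at hsucc <;> omega
    have hle' : (2 * (C ∩ Set.Icc 1 (N (t + 1))).ncard : ℝ) ≤ N (t + 1) := mod_cast hle
    linarith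
  · refine le_lowerDensityNat_of_eventually (c := 1) (Eventually.of_forall fun n => ?_)
    have hcount := ncard_inter_Icc_one_add_one_eq_count zero_mem_C n
    have hhalf := le_two_mul_count_C (n + 1)
    have hle : n ≤ 2 * (C ∩ Set.Icc 1 n).ncard + 1 := by omega
    have hle' : (n : ℝ) ≤ 2 * (C ∩ Set.Icc 1 n).ncard + 1 := mod_cast hle
    linarith

lemma not_mem_C_and_succ_mem_C {t z : ℕ} (he : Even t) (h₁ : N t ≤ z) (h₂ : z < N (t + 1)) :
    ¬(z ∈ C ∧ z + 1 ∈ C) := by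
  rintro ⟨hz, hz₁⟩
  have hN := Nat.even_iff.1 (even_N t.add_one_ne_zero)
  rw [mem_C_iff h₁ h₂, if_pos he, Nat.even_iff] at hz
  rw [mem_C_iff (t := t) (by omega) (by omega), if_pos he, Nat.even_iff] at hz₁
  omega

lemma lowerDensityNat_thick_C_le_zero :
    lowerDensityNat {z : ℕ |
      Set.Icc ((z : ℤ) - (1 : ℕ)) ((z : ℤ) + (1 : ℕ)) ⊆ (fun c : ℕ => (c : ℤ)) '' C} ≤ 0 := by
  set T := {z : ℕ |
    Set.Icc ((z : ℤ) - (1 : ℕ)) ((z : ℤ) + (1 : ℕ)) ⊆ (fun c : ℕ => (c : ℤ)) '' C}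
  refine lowerDensityNat_le_of_tendsto (m := fun s => N (2 * s + 1) - 1)
    (g := fun s => 1 / ((s : ℝ) + 1))
    ((tendsto_sub_atTop_nat 1).comp (N_strictMono.tendsto_atTop.comp tendsto_two_mul_add_one_atTop))
    tendsto_one_div_add_atTop_nhds_zero_nat (Eventually.of_forall fun s => ?_)
  have hsub : T ∩ Set.Icc 1 (N (2 * s + 1) - 1) ⊆ Set.Icc 1 (N (2 * s)) := by
    rintro z ⟨hz, hz₁, hzN⟩
    refine ⟨hz₁, le_of_not_gt fun hlt => not_mem_C_and_succ_mem_C (even_two_mul s) hlt.le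
      (by omega) ⟨mem_of_Icc_subset_image hz (by omega) (by omega),
        mem_of_Icc_subset_image hz (by omega) (by omega)⟩⟩
  have hcard : (T ∩ Set.Icc 1 (N (2 * s + 1) - 1)).ncard ≤ N (2 * s) := by
    simpa using Set.ncard_le_ncard hsub (Set.finite_Icc _ _)
  have hmul : (s + 1) * (T ∩ Set.Icc 1 (N (2 * s + 1) - 1)).ncard ≤ N (2 * s + 1) - 1 :=
    (Nat.mul_le_mul (by omega) hcard).trans (Nat.le_sub_one_of_lt (succ_mul_N_lt (2 * s)))
  have hmul' : ((s : ℝ) + 1) * (T ∩ Set.Icc 1 (N (2 * s + 1) - 1)).ncard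
      ≤ ((N (2 * s + 1) - 1 : ℕ) : ℝ) := mod_cast hmul
  rw [one_div, inv_mul_eq_div, le_div_iff₀ (by positivity)]
  linarith

lemma lt_mid_of_mem_C {t y : ℕ} (ho : ¬Even t) (hy : y ∈ C) (hyN : y < N (t + 1)) :
    y < mid t := by
  rcases lt_or_ge y (N t) with h | h
  · exact h.trans_le (N_le_mid t)
  · simpa [ho] using (mem_C_iff h hyN).1 hy

lemma tendsto_N_div_N_succ : Tendsto (fun t => (N t : ℝ) / N (t + 1)) atTop (𝓝 0) := by
  refine squeeze_zero (fun t => by positivity) (fun t => ?_)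
    tendsto_one_div_add_atTop_nhds_zero_nat
  have hN : ((t : ℝ) + 1) * N t ≤ N (t + 1) := mod_cast (succ_mul_N_lt t).le
  rw [div_le_div_iff₀ (mod_cast N_pos _) (by positivity)]
  linarith

lemma tendsto_blockBound (i : ℕ) :
    Tendsto (fun t => ((N t : ℝ) + N (t + 1)) / (2 * (N (t + 1) - 2 * i))) atTop (𝓝 (1 / 2)) := by
  have hinv : Tendsto (fun t => ((N (t + 1) : ℕ) : ℝ)⁻¹) atTop (𝓝 0) :=
    tendsto_inv_atTop_zero.comp (tendsto_natCast_atTop_atTop.comp tendsto_N_succ)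
  have hlim : Tendsto
      (fun t => ((N t : ℝ) / N (t + 1) + 1) / (2 * (1 - 2 * i * ((N (t + 1) : ℕ) : ℝ)⁻¹)))
      atTop (𝓝 ((0 + 1) / (2 * (1 - 2 * i * 0)))) :=
    (tendsto_N_div_N_succ.add_const 1).div
      (tendsto_const_nhds.mul (tendsto_const_nhds.sub (tendsto_const_nhds.mul hinv)))
      (by norm_num)
  rw [show ((0 : ℝ) + 1) / (2 * (1 - 2 * i * 0)) = 1 / 2 by norm_num] at hlim
  refine hlim.congr fun t => ?_
  have hb : ((N (t + 1) : ℕ) : ℝ) ≠ 0 := mod_cast (N_pos (t + 1)).ne'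
  rw [div_add_one hb, show (1 : ℝ) - 2 * i * ((N (t + 1) : ℕ) : ℝ)⁻¹
    = (N (t + 1) - 2 * i) / N (t + 1) by field_simp, mul_div_assoc',
    div_div_div_cancel_right₀ hb]

lemma ncard_blockSetNat_C_le {i t : ℕ} (hi : 0 < i) (ho : ¬Even t) (hiN : 2 * i < N (t + 1)) :
    ((blockSetNat C i ∩ Set.Icc 1 (N (t + 1) / i - 1)).ncard : ℝ)
      ≤ (N t + N (t + 1)) / (2 * (N (t + 1) - 2 * i)) * ((N (t + 1) / i - 1 : ℕ) : ℝ) := by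
  set M := N (t + 1)
  set c := (blockSetNat C i ∩ Set.Icc 1 (M / i - 1)).ncard
  have hcount : c ≤ mid t / i :=
    ncard_blockSetNat_inter_Icc_le hi fun y hy hyM => lt_mid_of_mem_C ho hy hyM
  have hM : M ≤ (M / i - 1) * i + 2 * i := by
    have := Nat.lt_div_mul_add (a := M) hi
    have := Nat.le_mul_of_pos_left i ((Nat.le_div_iff_mul_le hi).2 (by omega : 1 * i ≤ M))
    rw [Nat.sub_one_mul]
    omega
  have hMr : (M : ℝ) - 2 * i ≤ ((M / i - 1 : ℕ) : ℝ) * i := by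
    have : (M : ℝ) ≤ ((M / i - 1 : ℕ) : ℝ) * i + 2 * i := mod_cast hM
    linarith
  have hc : (c : ℝ) * i ≤ mid t := by
    have : (c : ℝ) ≤ (mid t : ℝ) / i := (Nat.cast_le.2 hcount).trans Nat.cast_div_le
    rwa [le_div_iff₀ (by positivity)] at this
  have hmid : (2 * mid t : ℝ) = N t + M :=
    mod_cast two_mul_mid (by rintro rfl; exact ho ⟨0, rfl⟩)
  have hpos : (0 : ℝ) < M - 2 * i := by
    have : (2 * i : ℝ) < M := mod_cast hiN
    linarith
  rw [← hmid, mul_div_mul_left _ _ two_ne_zero, div_mul_eq_mul_div, le_div_iff₀ hpos]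
  nlinarith [mul_le_mul_of_nonneg_left hMr (Nat.cast_nonneg c),
    mul_le_mul_of_nonneg_right hc (Nat.cast_nonneg (M / i - 1))]

lemma lowerDensityNat_blockSetNat_C_le {i : ℕ} (hi : 0 < i) :
    lowerDensityNat (blockSetNat C i) ≤ 1 / 2 := by
  have hodd := tendsto_N_succ.comp tendsto_two_mul_add_one_atTop
  refine lowerDensityNat_le_of_tendsto (m := fun s => N (2 * s + 1 + 1) / i - 1)
    ((tendsto_sub_atTop_nat 1).comp ((Nat.tendsto_div_const_atTop hi.ne').comp hodd))
    ((tendsto_blockBound i).comp tendsto_two_mul_add_one_atTop) ?_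
  filter_upwards [hodd.eventually_gt_atTop (2 * i)] with s hs
  exact ncard_blockSetNat_C_le hi s.not_even_two_mul_add_one hs

lemma lowerDensityNat_blockSetNat_C {i : ℕ} (hi : 0 < i) :
    lowerDensityNat (blockSetNat C i) = lowerDensityNat C :=
  le_antisymm (lowerDensityNat_C ▸ lowerDensityNat_blockSetNat_C_le hi)
    (lowerDensityNat_le_lowerDensityNat_blockSetNat C hi)

end Counterexample

theorem stmt_18 :
    ∃ C : Set ℕ, 0 < lowerDensityNat C ∧
      Tendsto (fun i : ℕ => lowerDensityNat (blockSetNat C i)) atTop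
        (nhds (lowerDensityNat C)) ∧
      ∀ β : ℝ, 0 < β → ∃ k : ℕ,
        lowerDensityNat {z : ℕ |
          Set.Icc ((z : ℤ) - k) ((z : ℤ) + k) ⊆ (fun c : ℕ => (c : ℤ)) '' C} < β := by
  refine ⟨Counterexample.C, ?_, ?_, fun β hβ => ⟨1, ?_⟩⟩
  · rw [Counterexample.lowerDensityNat_C]
    norm_num
  · refine tendsto_const_nhds.congr' ?_
    filter_upwards [eventually_gt_atTop 0] with i hi
    exact (Counterexample.lowerDensityNat_blockSetNat_C hi).symm
  · exact Counterexample.lowerDensityNat_thick_C_le_zero.trans_lt hβ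
end
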